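/- arXiv:math/9805045 — 6 statements merged into one kernel-verified Lean document; each statement's English description precedes it below -/
import Mathlib

section
/- If x is a nonzero element of E and n is a positive integer, then every complex n-th root of x belongs to E. -/
open Complex

/-- A subfield `F` of `ℂ` is closed under `exp` and `log` (principal branch:
`Complex.log` has imaginary part in `(-π, π]`). -/
def ELClosed (F : Subfield ℂ) : Prop :=
  (∀ x ∈ F, Complex.exp x ∈ F) ∧ (∀ x ∈ F, x ≠ 0 → Complex.log x ∈ F)

/-- The field `𝔼` of EL numbers: the intersection of all subfields of `ℂ`
closed under `exp` and `log`. -/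
noncomputable def EL : Subfield ℂ := sInf {F | ELClosed F}

lemma EL_exp {x : ℂ} (hx : x ∈ EL) : Complex.exp x ∈ EL := by
  rw [EL, Subfield.mem_sInf] at *
  exact fun F hF => hF.1 x (hx F hF)

lemma EL_log {x : ℂ} (hx : x ∈ EL) (hx0 : x ≠ 0) : Complex.log x ∈ EL := by
  rw [EL, Subfield.mem_sInf] at *
  exact fun F hF => hF.2 x (hx F hF) hx0

lemma piI_mem_EL : (Real.pi : ℂ) * Complex.I ∈ EL := by
  have h : Complex.log (-1) = Real.pi * Complex.I := Complex.log_neg_one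
  rw [← h]
  exact EL_log (Subfield.neg_mem _ (Subfield.one_mem _)) (by norm_num)

/-- Every `n`-th root of a nonzero EL number is an EL number. -/
theorem nthRoot_mem_EL (x : ℂ) (hx : x ∈ EL) (hx0 : x ≠ 0) (n : ℕ) (hn : 0 < n)
    (z : ℂ) (hz : z ^ n = x) : z ∈ EL := by
  have hz0 : z ≠ 0 := fun h => hx0 (by rw [← hz, h, zero_pow hn.ne'])
  have key : Complex.exp ((n : ℂ) * Complex.log z) = Complex.exp (Complex.log x) := by
    rw [Complex.exp_log hx0, ← hz, Complex.exp_nat_mul, Complex.exp_log hz0]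
  obtain ⟨k, hk⟩ := Complex.exp_eq_exp_iff_exists_int.mp key
  have hlogz : Complex.log z = (Complex.log x + k * (2 * Real.pi * Complex.I)) / n := by
    field_simp [Nat.cast_ne_zero.mpr hn.ne'] at hk ⊢
    linear_combination hk
  have hmem : Complex.log z ∈ EL := by
    rw [hlogz]
    refine Subfield.div_mem _ (Subfield.add_mem _ (EL_log hx hx0) ?_) (natCast_mem _ n)
    have : (k : ℂ) * (2 * Real.pi * Complex.I) = ((2 * k : ℤ) : ℂ) * ((Real.pi : ℂ) * Complex.I) := by
      push_cast; ring
    rw [this]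
    exact Subfield.mul_mem _ (intCast_mem _ (2 * k)) piI_mem_EL
  have := EL_exp hmem
  rwa [Complex.exp_log hz0] at this
end

section
/- (Division Lemma) If A = (α_1, …, α_n) is a tower and q_1, …, q_n are nonzero integers, then B = (α_1/q_1, …, α_n/q_n) is also a tower, and A_i ⊆ B_i for all i. -/
open Complex

/-- `towerField α i` is the subfield `A_i = ℚ(α₁, e^{α₁}, …, α_i, e^{α_i})` of `ℂ`
generated by the first `i` entries of `α` together with their exponentials
(every subfield of `ℂ` contains `ℚ`). In particular `towerField α 0 = ℚ`. -/
noncomputable def towerField {n : ℕ} (α : Fin n → ℂ) (i : ℕ) : Subfield ℂ :=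
  Subfield.closure {x | ∃ j : Fin n, (j : ℕ) < i ∧ (x = α j ∨ x = Complex.exp (α j))}

/-- A tower: a finite sequence of nonzero complex numbers such that for each `i`
there is an integer `m_i > 0` with `α_i ^ m_i ∈ A_{i-1}` or `e^{α_i m_i} ∈ A_{i-1}`. -/
def IsTower {n : ℕ} (α : Fin n → ℂ) : Prop :=
  (∀ i, α i ≠ 0) ∧
  ∀ i : Fin n, ∃ m : ℕ, 0 < m ∧
    ((α i) ^ m ∈ towerField α (i : ℕ) ∨
      Complex.exp (α i * (m : ℂ)) ∈ towerField α (i : ℕ))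

/-- Division Lemma: dividing the entries of a tower by nonzero integers again
gives a tower, and `A_i ⊆ B_i` for all `i`. -/
theorem divisionLemma {n : ℕ} (α : Fin n → ℂ) (q : Fin n → ℤ)
    (hA : IsTower α) (hq : ∀ i, q i ≠ 0) :
    IsTower (fun i => α i / (q i : ℂ)) ∧
    ∀ i : ℕ, towerField α i ≤ towerField (fun i => α i / (q i : ℂ)) i := by
  set β : Fin n → ℂ := fun i => α i / (q i : ℂ) with hβ
  have hqC : ∀ i, (q i : ℂ) ≠ 0 := fun i => Int.cast_ne_zero.2 (hq i)
  have hle : ∀ i : ℕ, towerField α i ≤ towerField β i := by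
    intro i
    apply Subfield.closure_le.2
    rintro x ⟨j, hj, hx | hx⟩
    · have h1 : β j ∈ towerField β i := Subfield.subset_closure ⟨j, hj, Or.inl rfl⟩
      have hxx : x = β j * (q j : ℂ) := by
        rw [hx, hβ]; field_simp [hqC j]
      rw [hxx]
      exact mul_mem h1 (intCast_mem _ _)
    · have h1 : Complex.exp (β j) ∈ towerField β i := Subfield.subset_closure ⟨j, hj, Or.inr rfl⟩
      have hxx : x = Complex.exp (β j) ^ (q j) := by
        rw [hx, ← Complex.exp_int_mul]
        congr 1
        rw [hβ]
        field_simp [hqC j]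
      rw [hxx]
      exact zpow_mem h1 _
  refine ⟨⟨fun i => div_ne_zero (hA.1 i) (hqC i), ?_⟩, hle⟩
  intro i
  obtain ⟨m, hm, hcase⟩ := hA.2 i
  rcases hcase with h | h
  · refine ⟨m, hm, Or.inl ?_⟩
    have he : β i ^ m = α i ^ m / (q i : ℂ) ^ m := div_pow _ _ _
    rw [he]
    exact div_mem (hle i h) (pow_mem (intCast_mem _ (q i)) m)
  · refine ⟨m * (q i).natAbs, Nat.mul_pos hm (Int.natAbs_pos.2 (hq i)), Or.inr ?_⟩
    have hmem := hle i h
    rcases Int.natAbs_eq (q i) with he | he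
    · have hc : ((q i).natAbs : ℂ) = (q i : ℂ) := by
        rw [← Int.cast_natCast (R := ℂ), ← he]
      have heq : β i * ((m * (q i).natAbs : ℕ) : ℂ) = α i * m := by
        have h3 : β i * ((m * (q i).natAbs : ℕ) : ℂ) = α i * m * ((q i : ℂ) * (q i : ℂ)⁻¹) := by
          push_cast [hc, hβ]; ring
        rw [h3, mul_inv_cancel₀ (hqC i), mul_one]
      rw [heq]; exact hmem
    · have hc : ((q i).natAbs : ℂ) = -(q i : ℂ) := by
        have h2 : (((q i).natAbs : ℤ)) = -(q i) := by omega
        rw [← Int.cast_natCast (R := ℂ), h2, Int.cast_neg]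
      have heq : β i * ((m * (q i).natAbs : ℕ) : ℂ) = -(α i * m) := by
        have h3 : β i * ((m * (q i).natAbs : ℕ) : ℂ) = -(α i * m) * ((q i : ℂ) * (q i : ℂ)⁻¹) := by
          push_cast [hc, hβ]; ring
        rw [h3, mul_inv_cancel₀ (hqC i), mul_one]
      rw [heq, Complex.exp_neg]
      exact inv_mem hmem
end

section
/- (Reduction Lemma) For every γ ∈ E there exists a reduced tower for γ, i.e., a tower A = (α_1, …, α_n) with the α_i linearly independent over Q and γ ∈ A_n. -/
open Complex

lemma towerField_mono {n : ℕ} (α : Fin n → ℂ) {i j : ℕ} (h : i ≤ j) :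
    towerField α i ≤ towerField α j := by
  apply Subfield.closure_mono
  rintro x ⟨k, hk, hx⟩
  exact ⟨k, lt_of_lt_of_le hk h, hx⟩

lemma mem_towerField {n : ℕ} (α : Fin n → ℂ) {i : ℕ} (j : Fin n) (hj : (j : ℕ) < i) :
    α j ∈ towerField α i :=
  Subfield.subset_closure ⟨j, hj, Or.inl rfl⟩

lemma exp_mem_towerField {n : ℕ} (α : Fin n → ℂ) {i : ℕ} (j : Fin n) (hj : (j : ℕ) < i) :
    Complex.exp (α j) ∈ towerField α i :=
  Subfield.subset_closure ⟨j, hj, Or.inr rfl⟩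

lemma towerField_castSucc {n : ℕ} (α : Fin (n + 1) → ℂ) {i : ℕ} (hi : i ≤ n) :
    towerField (α ∘ Fin.castSucc) i = towerField α i := by
  unfold towerField
  congr 1
  ext x
  constructor
  · rintro ⟨j, hj, hx⟩
    exact ⟨Fin.castSucc j, hj, hx⟩
  · rintro ⟨j, hj, hx⟩
    have hjn : (j : ℕ) < n := lt_of_lt_of_le hj hi
    refine ⟨⟨(j : ℕ), hjn⟩, hj, ?_⟩
    have : Fin.castSucc (⟨(j : ℕ), hjn⟩ : Fin n) = j := by
      apply Fin.ext; simp
    simpa [Function.comp, this] using hx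

lemma towerField_snoc {n : ℕ} (α : Fin n → ℂ) (a : ℂ) {i : ℕ} (hi : i ≤ n) :
    towerField (Fin.snoc α a) i = towerField α i := by
  have h := towerField_castSucc (Fin.snoc α a) hi
  have h2 : (Fin.snoc α a : Fin (n+1) → ℂ) ∘ Fin.castSucc = α := by
    funext j; simp
  rw [h2] at h
  exact h.symm

lemma towerField_append_left {n m : ℕ} (α : Fin n → ℂ) (β : Fin m → ℂ) {i : ℕ} (hi : i ≤ n) :
    towerField (Fin.append α β) i = towerField α i := by
  unfold towerField
  congr 1
  ext x
  constructor
  · rintro ⟨j, hj, hx⟩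
    have hjn : (j : ℕ) < n := lt_of_lt_of_le hj hi
    refine ⟨⟨(j : ℕ), hjn⟩, hj, ?_⟩
    have : Fin.castAdd m (⟨(j : ℕ), hjn⟩ : Fin n) = j := by
      apply Fin.ext; simp
    rw [← this, Fin.append_left] at hx
    exact hx
  · rintro ⟨j, hj, hx⟩
    refine ⟨Fin.castAdd m j, by simpa using hj, ?_⟩
    rwa [Fin.append_left]

lemma towerField_le_append_right {n m : ℕ} (α : Fin n → ℂ) (β : Fin m → ℂ) (j : ℕ) :
    towerField β j ≤ towerField (Fin.append α β) (n + j) := by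
  apply Subfield.closure_mono
  rintro x ⟨k, hk, hx⟩
  refine ⟨Fin.natAdd n k, by simpa using hk, ?_⟩
  rwa [Fin.append_right]

lemma isTower_append {n m : ℕ} {α : Fin n → ℂ} {β : Fin m → ℂ}
    (hα : IsTower α) (hβ : IsTower β) : IsTower (Fin.append α β) := by
  constructor
  · intro i
    refine Fin.addCases (fun j => ?_) (fun j => ?_) i
    · rw [Fin.append_left]; exact hα.1 j
    · rw [Fin.append_right]; exact hβ.1 j
  · intro i
    refine Fin.addCases (fun j => ?_) (fun j => ?_) i
    · obtain ⟨q, hq, hcond⟩ := hα.2 j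
      refine ⟨q, hq, ?_⟩
      rw [Fin.append_left]
      have he : towerField (Fin.append α β) ((Fin.castAdd m j : Fin (n+m)) : ℕ)
          = towerField α (j : ℕ) := by
        have : ((Fin.castAdd m j : Fin (n+m)) : ℕ) = (j : ℕ) := rfl
        rw [this]
        exact towerField_append_left α β (le_of_lt j.isLt)
      rw [he]
      exact hcond
    · obtain ⟨q, hq, hcond⟩ := hβ.2 j
      refine ⟨q, hq, ?_⟩
      rw [Fin.append_right]
      have hle : towerField β (j : ℕ) ≤ towerField (Fin.append α β) ((Fin.natAdd n j : Fin (n+m)) : ℕ) := by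
        have : ((Fin.natAdd n j : Fin (n+m)) : ℕ) = n + (j : ℕ) := rfl
        rw [this]
        exact towerField_le_append_right α β (j : ℕ)
      rcases hcond with h | h
      · exact Or.inl (hle h)
      · exact Or.inr (hle h)

lemma isTower_snoc {n : ℕ} {α : Fin n → ℂ} {a : ℂ} (hα : IsTower α) (ha : a ≠ 0)
    (hc : ∃ q : ℕ, 0 < q ∧ (a ^ q ∈ towerField α n ∨ Complex.exp (a * (q : ℂ)) ∈ towerField α n)) :
    IsTower (Fin.snoc α a) := by
  constructor
  · intro i
    refine Fin.lastCases ?_ (fun j => ?_) i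
    · rw [Fin.snoc_last]; exact ha
    · rw [Fin.snoc_castSucc]; exact hα.1 j
  · intro i
    refine Fin.lastCases ?_ (fun j => ?_) i
    · obtain ⟨q, hq, hcond⟩ := hc
      refine ⟨q, hq, ?_⟩
      have hv : ((Fin.last n : Fin (n+1)) : ℕ) = n := rfl
      rw [Fin.snoc_last, hv, towerField_snoc α a (le_refl n)]
      exact hcond
    · obtain ⟨q, hq, hcond⟩ := hα.2 j
      refine ⟨q, hq, ?_⟩
      have hv : ((Fin.castSucc j : Fin (n+1)) : ℕ) = (j : ℕ) := rfl
      rw [Fin.snoc_castSucc, hv, towerField_snoc α a (le_of_lt j.isLt)]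
      exact hcond

lemma isTower_elim0 : IsTower (Fin.elim0 : Fin 0 → ℂ) :=
  ⟨fun i => i.elim0, fun i => i.elim0⟩

lemma towerField_zero {n m : ℕ} (α : Fin n → ℂ) (β : Fin m → ℂ) :
    towerField α 0 = towerField β 0 := by
  unfold towerField
  congr 1
  ext x
  constructor
  · rintro ⟨j, hj, _⟩; exact absurd hj (Nat.not_lt_zero _)
  · rintro ⟨j, hj, _⟩; exact absurd hj (Nat.not_lt_zero _)

lemma towerField_le {n : ℕ} {α : Fin n → ℂ} {i : ℕ} {K : Subfield ℂ}
    (h : ∀ j : Fin n, (j : ℕ) < i → α j ∈ K ∧ Complex.exp (α j) ∈ K) :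
    towerField α i ≤ K := by
  apply Subfield.closure_le.mpr
  rintro x ⟨j, hj, hx | hx⟩ <;> subst hx
  exacts [(h j hj).1, (h j hj).2]

lemma span_mem_subfield {m : ℕ} {β : Fin m → ℂ} {K : Subfield ℂ} (hβ : ∀ i, β i ∈ K)
    {x : ℂ} (hx : x ∈ Submodule.span ℚ (Set.range β)) : x ∈ K := by
  induction hx using Submodule.span_induction with
  | mem y hy => obtain ⟨i, rfl⟩ := hy; exact hβ i
  | zero => exact zero_mem K
  | add y z _ _ hy hz => exact add_mem hy hz
  | smul c y _ hy =>
      rw [Rat.smul_def]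
      exact mul_mem (SubfieldClass.ratCast_mem K c) hy

lemma exp_span_mem {m : ℕ} {β : Fin m → ℂ} {K : Subfield ℂ}
    (hβ : ∀ i, Complex.exp (β i) ∈ K) {a : ℂ}
    (ha : a ∈ Submodule.span ℚ (Set.range β)) :
    ∃ q : ℕ, 0 < q ∧ Complex.exp (a * (q : ℂ)) ∈ K := by
  obtain ⟨c, hc⟩ := (Submodule.mem_span_range_iff_exists_fun ℚ).mp ha
  set q : ℕ := ∏ i, (c i).den with hqdef
  have hq : 0 < q := Finset.prod_pos (fun i _ => (c i).pos)
  have hd : ∀ i : Fin m, ∃ d : ℤ, (d : ℚ) = (q : ℚ) * c i := by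
    intro i
    have hdvd : (c i).den ∣ q := Finset.dvd_prod_of_mem _ (Finset.mem_univ i)
    obtain ⟨t, ht⟩ := hdvd
    refine ⟨t * (c i).num, ?_⟩
    push_cast
    rw [ht]
    push_cast
    rw [mul_comm ((c i).den : ℚ) (t : ℚ), mul_assoc, mul_comm ((c i).den : ℚ) (c i),
      Rat.mul_den_eq_num]
  choose d hdq using hd
  refine ⟨q, hq, ?_⟩
  have key : a * (q : ℂ) = ∑ i, (d i : ℂ) * β i := by
    rw [← hc, Finset.sum_mul]
    apply Finset.sum_congr rfl
    intro i _
    rw [Rat.smul_def]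
    have : ((d i : ℚ) : ℂ) = (((q : ℚ) * c i : ℚ) : ℂ) := by rw [hdq i]
    push_cast at this
    rw [show ((d i : ℂ)) = (q : ℂ) * (c i : ℂ) from this]
    ring
  rw [key, Complex.exp_sum]
  apply prod_mem
  intro i _
  rw [Complex.exp_int_mul]
  exact Subfield.zpow_mem K (hβ i) (d i)

lemma reduce : ∀ (n : ℕ) (α : Fin n → ℂ), IsTower α →
    ∃ (m : ℕ) (β : Fin m → ℂ), IsTower β ∧ LinearIndependent ℚ β ∧
      towerField α n ≤ towerField β m := by
  intro n
  induction n with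
  | zero =>
      intro α _
      exact ⟨0, Fin.elim0, isTower_elim0, linearIndependent_empty_type,
        (towerField_zero α Fin.elim0).le⟩
  | succ n ih =>
      intro α h
      set α' : Fin n → ℂ := α ∘ Fin.castSucc with hα'def
      have hα' : IsTower α' := by
        constructor
        · intro i; exact h.1 (Fin.castSucc i)
        · intro i
          obtain ⟨q, hq, hcond⟩ := h.2 (Fin.castSucc i)
          refine ⟨q, hq, ?_⟩
          have hv : ((Fin.castSucc i : Fin (n+1)) : ℕ) = (i : ℕ) := rfl
          rw [hv] at hcond
          rw [hα'def]
          rw [towerField_castSucc α (le_of_lt i.isLt)]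
          exact hcond
      obtain ⟨m, β, hβ, hind, hle⟩ := ih α' hα'
      have hle' : towerField α n ≤ towerField β m := by
        rw [← towerField_castSucc α (le_refl n)]
        exact hle
      set a : ℂ := α (Fin.last n) with hadef
      have ha : a ≠ 0 := h.1 (Fin.last n)
      have hmemβ : ∀ (x : ℂ), x ∈ towerField β m → x ∈ towerField (Fin.snoc β a) (m+1) := by
        intro x hx
        apply towerField_mono (Fin.snoc β a) (Nat.le_succ m)
        rwa [towerField_snoc β a (le_refl m)]
      by_cases hdep : LinearIndependent ℚ (Fin.snoc β a : Fin (m+1) → ℂ)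
      · refine ⟨m + 1, Fin.snoc β a, ?_, hdep, ?_⟩
        · apply isTower_snoc hβ ha
          obtain ⟨q, hq, hcond⟩ := h.2 (Fin.last n)
          have hv : ((Fin.last n : Fin (n+1)) : ℕ) = n := rfl
          rw [hv] at hcond
          exact ⟨q, hq, hcond.imp (fun hx => hle' hx) (fun hx => hle' hx)⟩
        · apply towerField_le
          intro j hj
          rcases Nat.lt_succ_iff_lt_or_eq.mp hj with hjn | hjn
          · exact ⟨hmemβ _ (hle' (mem_towerField α j hjn)),
              hmemβ _ (hle' (exp_mem_towerField α j hjn))⟩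
          · have hj' : j = Fin.last n := Fin.ext hjn
            subst hj'
            constructor
            · have := mem_towerField (Fin.snoc β a) (Fin.last m)
                (by rw [Fin.val_last]; exact Nat.lt_succ_self m)
              rwa [Fin.snoc_last] at this
            · have := exp_mem_towerField (Fin.snoc β a) (Fin.last m)
                (by rw [Fin.val_last]; exact Nat.lt_succ_self m)
              rwa [Fin.snoc_last] at this
      · have haspan : a ∈ Submodule.span ℚ (Set.range β) := by
          by_contra hnot
          exact hdep (linearIndependent_fin_snoc.mpr ⟨hind, hnot⟩)
        have haB : a ∈ towerField β m :=
          span_mem_subfield (fun i => mem_towerField β i i.isLt) haspan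
        obtain ⟨q, hq, hE⟩ := exp_span_mem (K := towerField β m)
          (fun i => exp_mem_towerField β i i.isLt) haspan
        by_cases hdep2 : LinearIndependent ℚ (Fin.snoc β (Complex.exp a) : Fin (m+1) → ℂ)
        · have hmemβ2 : ∀ (x : ℂ), x ∈ towerField β m →
              x ∈ towerField (Fin.snoc β (Complex.exp a)) (m+1) := by
            intro x hx
            apply towerField_mono _ (Nat.le_succ m)
            rwa [towerField_snoc β (Complex.exp a) (le_refl m)]
          refine ⟨m + 1, Fin.snoc β (Complex.exp a), ?_, hdep2, ?_⟩
          · apply isTower_snoc hβ (Complex.exp_ne_zero a)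
            refine ⟨q, hq, Or.inl ?_⟩
            rw [← Complex.exp_nat_mul, mul_comm]
            exact hE
          · apply towerField_le
            intro j hj
            rcases Nat.lt_succ_iff_lt_or_eq.mp hj with hjn | hjn
            · exact ⟨hmemβ2 _ (hle' (mem_towerField α j hjn)),
                hmemβ2 _ (hle' (exp_mem_towerField α j hjn))⟩
            · have hj' : j = Fin.last n := Fin.ext hjn
              subst hj'
              refine ⟨hmemβ2 _ haB, ?_⟩
              have := mem_towerField (Fin.snoc β (Complex.exp a)) (Fin.last m)
                (by rw [Fin.val_last]; exact Nat.lt_succ_self m)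
              rwa [Fin.snoc_last] at this
        · have hespan : Complex.exp a ∈ Submodule.span ℚ (Set.range β) := by
            by_contra hnot
            exact hdep2 (linearIndependent_fin_snoc.mpr ⟨hind, hnot⟩)
          have heB : Complex.exp a ∈ towerField β m :=
            span_mem_subfield (fun i => mem_towerField β i i.isLt) hespan
          refine ⟨m, β, hβ, hind, ?_⟩
          apply towerField_le
          intro j hj
          rcases Nat.lt_succ_iff_lt_or_eq.mp hj with hjn | hjn
          · exact ⟨hle' (mem_towerField α j hjn), hle' (exp_mem_towerField α j hjn)⟩
          · have hj' : j = Fin.last n := Fin.ext hjn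
            subst hj'
            exact ⟨haB, heB⟩

noncomputable def towerNums : Subfield ℂ where
  carrier := {γ | ∃ (n : ℕ) (α : Fin n → ℂ), IsTower α ∧ γ ∈ towerField α n}
  zero_mem' := ⟨0, Fin.elim0, isTower_elim0, zero_mem _⟩
  one_mem' := ⟨0, Fin.elim0, isTower_elim0, one_mem _⟩
  add_mem' := by
    rintro x y ⟨n, α, hα, hx⟩ ⟨m, β, hβ, hy⟩
    refine ⟨n + m, Fin.append α β, isTower_append hα hβ, ?_⟩
    have h1 : x ∈ towerField (Fin.append α β) (n + m) := by
      apply towerField_mono _ (Nat.le_add_right n m)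
      rwa [towerField_append_left α β (le_refl n)]
    have h2 : y ∈ towerField (Fin.append α β) (n + m) :=
      towerField_le_append_right α β m hy
    exact add_mem h1 h2
  mul_mem' := by
    rintro x y ⟨n, α, hα, hx⟩ ⟨m, β, hβ, hy⟩
    refine ⟨n + m, Fin.append α β, isTower_append hα hβ, ?_⟩
    have h1 : x ∈ towerField (Fin.append α β) (n + m) := by
      apply towerField_mono _ (Nat.le_add_right n m)
      rwa [towerField_append_left α β (le_refl n)]
    have h2 : y ∈ towerField (Fin.append α β) (n + m) :=
      towerField_le_append_right α β m hy
    exact mul_mem h1 h2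
  neg_mem' := by
    rintro x ⟨n, α, hα, hx⟩
    exact ⟨n, α, hα, neg_mem hx⟩
  inv_mem' := by
    rintro x ⟨n, α, hα, hx⟩
    exact ⟨n, α, hα, inv_mem hx⟩

lemma mem_towerNums_snoc {n : ℕ} {α : Fin n → ℂ} (hα : IsTower α) {a : ℂ} (ha : a ≠ 0)
    (hc : ∃ q : ℕ, 0 < q ∧ (a ^ q ∈ towerField α n ∨ Complex.exp (a * (q : ℂ)) ∈ towerField α n)) :
    a ∈ towerNums ∧ Complex.exp a ∈ towerNums := by
  have ht : IsTower (Fin.snoc α a : Fin (n+1) → ℂ) := isTower_snoc hα ha hc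
  have h1 : a ∈ towerField (Fin.snoc α a) (n+1) := by
    have := mem_towerField (Fin.snoc α a) (Fin.last n)
      (by rw [Fin.val_last]; exact Nat.lt_succ_self n)
    rwa [Fin.snoc_last] at this
  have h2 : Complex.exp a ∈ towerField (Fin.snoc α a) (n+1) := by
    have := exp_mem_towerField (Fin.snoc α a) (Fin.last n)
      (by rw [Fin.val_last]; exact Nat.lt_succ_self n)
    rwa [Fin.snoc_last] at this
  exact ⟨⟨n+1, _, ht, h1⟩, ⟨n+1, _, ht, h2⟩⟩

lemma elClosed_towerNums : ELClosed towerNums := by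
  constructor
  · rintro x ⟨n, α, hα, hx⟩
    by_cases hx0 : x = 0
    · subst hx0
      rw [Complex.exp_zero]
      exact one_mem towerNums
    · refine (mem_towerNums_snoc hα hx0 ⟨1, one_pos, Or.inl ?_⟩).2
      simpa using hx
  · rintro x ⟨n, α, hα, hx⟩ hx0
    by_cases hl0 : Complex.log x = 0
    · rw [hl0]; exact zero_mem towerNums
    · refine (mem_towerNums_snoc hα hl0 ⟨1, one_pos, Or.inr ?_⟩).1
      rw [Nat.cast_one, mul_one, Complex.exp_log hx0]
      exact hx


/-- Reduction Lemma: every EL number has a reduced tower, i.e. a tower whose entries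
are `ℚ`-linearly independent and whose top field contains it. -/
theorem reductionLemma (γ : ℂ) (hγ : γ ∈ EL) :
    ∃ (n : ℕ) (α : Fin n → ℂ), IsTower α ∧ LinearIndependent ℚ α ∧
      γ ∈ towerField α n := by
  have hle : EL ≤ towerNums := sInf_le elClosed_towerNums
  obtain ⟨n, α, hα, hmem⟩ := hle hγ
  obtain ⟨m, β, hβ, hind, hsub⟩ := reduce n α hα
  exact ⟨m, β, hβ, hind, hsub hmem⟩
end

section
/- For every γ ∈ E there exists a tower for γ, that is, a finite sequence (α_1, …, α_n) of nonzero complex numbers such that for each i, α_i ∈ A_{i-1} or e^{α_i} ∈ A_{i-1}, and γ ∈ A_n. -/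
open Complex

def HasTower (γ : ℂ) : Prop :=
  ∃ (n : ℕ) (α : Fin n → ℂ), (∀ i, α i ≠ 0) ∧
    (∀ i : Fin n, α i ∈ towerField α (i : ℕ) ∨
      Complex.exp (α i) ∈ towerField α (i : ℕ)) ∧
    γ ∈ towerField α n

lemma towerField_le_of_subset {n m : ℕ} {α : Fin n → ℂ} {β : Fin m → ℂ} {i i' : ℕ}
    (h : ∀ j : Fin n, (j : ℕ) < i → ∃ k : Fin m, (k : ℕ) < i' ∧ β k = α j) :
    towerField α i ≤ towerField β i' := by
  apply Subfield.closure_mono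
  rintro x ⟨j, hj, hx⟩
  obtain ⟨k, hk, hbk⟩ := h j hj
  exact ⟨k, hk, by rw [hbk]; exact hx⟩

lemma append_apply_left {n m : ℕ} (α : Fin n → ℂ) (α' : Fin m → ℂ)
    (j : Fin (n + m)) (h : (j : ℕ) < n) :
    Fin.append α α' j = α ⟨j, h⟩ := by
  exact (congrArg (Fin.append α α') (Fin.ext rfl : j = Fin.castAdd m ⟨j, h⟩)).trans
    (Fin.append_left α α' ⟨j, h⟩)

lemma append_apply_right {n m : ℕ} (α : Fin n → ℂ) (α' : Fin m → ℂ)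
    (j : Fin (n + m)) (h : n ≤ (j : ℕ)) :
    Fin.append α α' j = α' ⟨(j : ℕ) - n, by omega⟩ := by
  exact (congrArg (Fin.append α α')
      (Fin.ext (by simp; omega) : j = Fin.natAdd n ⟨(j : ℕ) - n, by omega⟩)).trans
    (Fin.append_right α α' _)

lemma HasTower.concat {γ δ : ℂ} (hγ : HasTower γ) (hδ : HasTower δ) :
    ∃ (n : ℕ) (α : Fin n → ℂ), (∀ i, α i ≠ 0) ∧
      (∀ i : Fin n, α i ∈ towerField α (i : ℕ) ∨
        Complex.exp (α i) ∈ towerField α (i : ℕ)) ∧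
      γ ∈ towerField α n ∧ δ ∈ towerField α n := by
  obtain ⟨n, α, hne, ht, hγ⟩ := hγ
  obtain ⟨m, α', hne', ht', hδ⟩ := hδ
  have hleft : ∀ i : ℕ, towerField α i ≤ towerField (Fin.append α α') i :=
    fun i => towerField_le_of_subset fun j hj =>
      ⟨Fin.castAdd m j, hj, Fin.append_left α α' j⟩
  have hright : ∀ i : ℕ, towerField α' i ≤ towerField (Fin.append α α') (n + i) :=
    fun i => towerField_le_of_subset fun j hj =>
      ⟨Fin.natAdd n j, by simpa using hj, Fin.append_right α α' j⟩
  refine ⟨n + m, Fin.append α α', ?_, ?_, ?_, ?_⟩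
  · intro i
    rcases lt_or_ge (i : ℕ) n with h | h
    · rw [append_apply_left α α' i h]; exact hne _
    · rw [append_apply_right α α' i h]; exact hne' _
  · intro i
    rcases lt_or_ge (i : ℕ) n with h | h
    · rw [append_apply_left α α' i h]
      exact (ht ⟨i, h⟩).imp (fun hh => hleft _ hh) (fun hh => hleft _ hh)
    · rw [append_apply_right α α' i h]
      have hle : towerField α' ((i : ℕ) - n) ≤ towerField (Fin.append α α') (i : ℕ) := by
        have := hright ((i : ℕ) - n)
        rwa [Nat.add_sub_cancel' h] at this
      exact (ht' ⟨(i : ℕ) - n, by omega⟩).imp (fun hh => hle hh) (fun hh => hle hh)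
  · exact towerField_le_of_subset (fun j hj => ⟨j, by omega, rfl⟩) (hleft n hγ)
  · exact hright m hδ

/-- Extend a tower by one element `x` with `x ∈ A_n` or `e^x ∈ A_n`. -/
lemma HasTower.snoc {n : ℕ} {α : Fin n → ℂ} (hne : ∀ i, α i ≠ 0)
    (ht : ∀ i : Fin n, α i ∈ towerField α (i : ℕ) ∨
      Complex.exp (α i) ∈ towerField α (i : ℕ))
    {x : ℂ} (hx0 : x ≠ 0)
    (hx : x ∈ towerField α n ∨ Complex.exp x ∈ towerField α n) :
    ∃ (β : Fin (n + 1) → ℂ), (∀ i, β i ≠ 0) ∧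
      (∀ i : Fin (n + 1), β i ∈ towerField β (i : ℕ) ∨
        Complex.exp (β i) ∈ towerField β (i : ℕ)) ∧
      x ∈ towerField β (n + 1) ∧ Complex.exp x ∈ towerField β (n + 1) := by
  set β : Fin (n + 1) → ℂ := Fin.append α (fun _ : Fin 1 => x) with hβ
  have hleft : ∀ i : ℕ, towerField α i ≤ towerField β i :=
    fun i => towerField_le_of_subset fun j hj =>
      ⟨Fin.castAdd 1 j, hj, Fin.append_left α _ j⟩
  have hlast : β ⟨n, n.lt_succ_self⟩ = x := append_apply_right α _ _ le_rfl
  refine ⟨β, ?_, ?_, ?_, ?_⟩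
  · intro i
    rcases lt_or_ge (i : ℕ) n with h | h
    · rw [hβ, append_apply_left α _ i h]; exact hne _
    · rw [hβ, append_apply_right α _ i h]; exact hx0
  · intro i
    rcases lt_or_ge (i : ℕ) n with h | h
    · rw [show β i = α ⟨i, h⟩ from by rw [hβ]; exact append_apply_left α _ i h]
      exact (ht ⟨i, h⟩).imp (fun hh => hleft _ hh) (fun hh => hleft _ hh)
    · have hi : (i : ℕ) = n := by omega
      have : β i = x := by
        rw [show i = ⟨n, n.lt_succ_self⟩ from Fin.ext hi]; exact hlast
      rw [this, hi]
      exact hx.imp (fun hh => hleft _ hh) (fun hh => hleft _ hh)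
  · exact Subfield.subset_closure ⟨⟨n, n.lt_succ_self⟩, n.lt_succ_self, Or.inl hlast.symm⟩
  · exact Subfield.subset_closure
      ⟨⟨n, n.lt_succ_self⟩, n.lt_succ_self, Or.inr (by rw [hlast])⟩

lemma hasTower_of_mem_rat {γ : ℂ} (h : ∀ F : Subfield ℂ, γ ∈ F) : HasTower γ :=
  ⟨0, Fin.elim0, fun i => i.elim0, fun i => i.elim0, h _⟩

noncomputable def towerSubfield : Subfield ℂ where
  carrier := {γ | HasTower γ}
  zero_mem' := hasTower_of_mem_rat fun F => F.zero_mem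
  one_mem' := hasTower_of_mem_rat fun F => F.one_mem
  add_mem' := by
    rintro a b ha hb
    obtain ⟨n, α, hne, ht, ha', hb'⟩ := HasTower.concat ha hb
    exact ⟨n, α, hne, ht, add_mem ha' hb'⟩
  mul_mem' := by
    rintro a b ha hb
    obtain ⟨n, α, hne, ht, ha', hb'⟩ := HasTower.concat ha hb
    exact ⟨n, α, hne, ht, mul_mem ha' hb'⟩
  neg_mem' := by
    rintro a ⟨n, α, hne, ht, ha⟩
    exact ⟨n, α, hne, ht, neg_mem ha⟩
  inv_mem' := by
    rintro a ⟨n, α, hne, ht, ha⟩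
    exact ⟨n, α, hne, ht, inv_mem ha⟩

lemma towerSubfield_exp {γ : ℂ} (h : HasTower γ) : HasTower (Complex.exp γ) := by
  rcases eq_or_ne γ 0 with rfl | h0
  · rw [Complex.exp_zero]; exact hasTower_of_mem_rat fun F => F.one_mem
  · obtain ⟨n, α, hne, ht, hγ⟩ := h
    obtain ⟨β, hbne, hbt, -, hexp⟩ := HasTower.snoc hne ht h0 (Or.inl hγ)
    exact ⟨n + 1, β, hbne, hbt, hexp⟩

lemma towerSubfield_log {γ : ℂ} (h : HasTower γ) (h0 : γ ≠ 0) :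
    HasTower (Complex.log γ) := by
  rcases eq_or_ne (Complex.log γ) 0 with hl | hl
  · rw [hl]; exact hasTower_of_mem_rat fun F => F.zero_mem
  · obtain ⟨n, α, hne, ht, hγ⟩ := h
    obtain ⟨β, hbne, hbt, hmem, -⟩ :=
      HasTower.snoc hne ht hl (Or.inr (by rw [Complex.exp_log h0]; exact hγ))
    exact ⟨n + 1, β, hbne, hbt, hmem⟩

/-- Every EL number has a tower (with all `m_i = 1`): a finite sequence of nonzero
complex numbers with `α_i ∈ A_{i-1}` or `e^{α_i} ∈ A_{i-1}` for each `i`,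
whose top field contains it. -/
theorem exists_tower (γ : ℂ) (hγ : γ ∈ EL) :
    ∃ (n : ℕ) (α : Fin n → ℂ), (∀ i, α i ≠ 0) ∧
      (∀ i : Fin n, α i ∈ towerField α (i : ℕ) ∨
        Complex.exp (α i) ∈ towerField α (i : ℕ)) ∧
      γ ∈ towerField α n := by
  have hF : ELClosed towerSubfield :=
    ⟨fun x hx => towerSubfield_exp hx, fun x hx h0 => towerSubfield_log hx h0⟩
  have hle : EL ≤ towerSubfield := sInf_le (show towerSubfield ∈ {F | ELClosed F} from hF)
  exact hle hγ
end

section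
/- Assuming Schanuel's conjecture: if B = (β_1, …, β_n) is a reduced tower, then for every i exactly one of β_i and e^{β_i} is algebraic over B_{i-1}, and the transcendence degree of B_i over Q is exactly i. -/
/-!
Transcendence degree over `ℚ` is the rank function of the algebraic matroid of `ℂ` over `ℚ`,
and being algebraic over the field generated by a set means lying in its matroid closure.
By the tower condition one of `β_i`, `e^{β_i}` is already algebraic over `B_{i-1}`, so
adjoining both raises the rank by at most one and `B_i` has rank at most `i`. Schanuel's
conjecture for the linearly independent `β_1, …, β_i` gives rank at least `i`; if both
`β_i` and `e^{β_i}` were algebraic over `B_{i-1}`, the rank of `B_i` would be at most `i - 1`.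
-/

open Complex

/-- Schanuel's conjecture: if `α₁, …, α_n` are `ℚ`-linearly independent complex numbers,
then the field `ℚ(α₁, e^{α₁}, …, α_n, e^{α_n})` has transcendence degree at least `n`
over `ℚ`, i.e. it contains `n` algebraically independent elements. -/
def SchanuelConjecture : Prop :=
  ∀ (n : ℕ) (α : Fin n → ℂ), LinearIndependent ℚ α →
    ∃ f : Fin n → ℂ,
      (∀ i, f i ∈ Subfield.closure
        (Set.range α ∪ Set.range fun i => Complex.exp (α i))) ∧
      AlgebraicIndependent ℚ f

open AlgebraicIndependent

theorem Matroid.eRk_insert_insert_le {α : Type*} (M : Matroid α) {x : α} {X : Set α} (y : α)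
    (hx : x ∈ M.closure X) : M.eRk (insert y (insert x X)) ≤ M.eRk X + 1 :=
  calc M.eRk (insert y (insert x X)) ≤ M.eRk (insert x X) + 1 := M.eRk_insert_le_add_one _ _
    _ = M.eRk X + 1 := by
      rw [← M.eRk_closure_eq, Matroid.closure_insert_eq_of_mem_closure hx, M.eRk_closure_eq]

section AlgebraicMatroid

variable {L : Type*} [Field L] [CharZero L]

theorem subfieldClosure_subset_matroid_closure (S : Set L) :
    (Subfield.closure S : Set L) ⊆ (matroid ℚ L).closure S := by
  rw [matroid_closure_eq]
  intro x hx
  induction hx using Subfield.closure_induction with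
  | mem x hx =>
    exact Subalgebra.algebraMap_mem _ (⟨x, Algebra.subset_adjoin hx⟩ : Algebra.adjoin ℚ S)
  | one => exact one_mem _
  | add x y _ _ hx hy => exact add_mem hx hy
  | neg x _ hx => exact neg_mem hx
  | inv x _ hx => exact IsAlgebraic.inv hx
  | mul x y _ _ hx hy => exact mul_mem hx hy

theorem mem_matroid_closure_of_isAlgebraic {S : Set L} {a : L}
    (ha : IsAlgebraic (Subfield.closure S) a) : a ∈ (matroid ℚ L).closure S := by
  obtain ⟨T, hT, hflat⟩ := matroid_isFlat_iff.mp ((matroid ℚ L).isFlat_closure (X := S))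
  have hle : (Subfield.closure S).toSubring ≤ T.toSubring := by
    intro x hx
    rw [Subalgebra.mem_toSubring, ← SetLike.mem_coe, hT]
    exact subfieldClosure_subset_matroid_closure S hx
  exact hflat a (ha.ringHom_of_comp_eq (Subring.inclusion hle) (RingHom.id L)
    (Subring.inclusion_injective hle) rfl)

theorem AlgebraicIndependent.card_le_eRk {ι : Type*} {f : ι → L}
    (hf : AlgebraicIndependent ℚ f) {S : Set L} (hfS : ∀ k, f k ∈ Subfield.closure S) :
    ENat.card ι ≤ (matroid ℚ L).eRk S := by
  replace hfS : Set.range f ⊆ (matroid ℚ L).closure S := Set.range_subset_iff.2 fun k =>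
    subfieldClosure_subset_matroid_closure S (hfS k)
  have hind : (matroid ℚ L).Indep (Set.range f) := matroid_indep_iff.mpr hf.to_subtype_range
  calc ENat.card ι ≤ (Set.range f).encard := hf.injective.encard_range
    _ ≤ (matroid ℚ L).eRk ((matroid ℚ L).closure S) := hind.encard_le_eRk_of_subset hfS
    _ = (matroid ℚ L).eRk S := (matroid ℚ L).eRk_closure_eq S

end AlgebraicMatroid

section Tower

variable {n : ℕ} (β : Fin n → ℂ)

-- `towerField β i` is `Subfield.closure (towerGens β i)` by definition.
def towerGens (i : ℕ) : Set ℂ :=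
  {x | ∃ j : Fin n, (j : ℕ) < i ∧ (x = β j ∨ x = Complex.exp (β j))}

theorem towerGens_succ (i : Fin n) :
    towerGens β (i + 1) = insert (β i) (insert (Complex.exp (β i)) (towerGens β i)) := by
  ext x
  simp only [towerGens, Set.mem_ofPred_eq, Set.mem_insert_iff]
  constructor
  · rintro ⟨j, hj, hx⟩
    rcases Nat.lt_succ_iff_lt_or_eq.mp hj with hj | hj
    · exact Or.inr (Or.inr ⟨j, hj, hx⟩)
    · obtain rfl : j = i := Fin.ext hj
      tauto
  · rintro (rfl | rfl | ⟨j, hj, hx⟩)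
    · exact ⟨i, Nat.lt_succ_self _, Or.inl rfl⟩
    · exact ⟨i, Nat.lt_succ_self _, Or.inr rfl⟩
    · exact ⟨j, Nat.lt_succ_of_lt hj, hx⟩

variable {β}

theorem IsTower.isAlgebraic_or (hβ : IsTower β) (i : Fin n) :
    IsAlgebraic (towerField β i) (β i) ∨ IsAlgebraic (towerField β i) (Complex.exp (β i)) := by
  obtain ⟨m, hm, h | h⟩ := hβ.2 i
  · exact Or.inl (IsAlgebraic.of_pow hm (isAlgebraic_algebraMap (⟨_, h⟩ : towerField β i)))
  · rw [mul_comm, Complex.exp_nat_mul] at h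
    exact Or.inr (IsAlgebraic.of_pow hm (isAlgebraic_algebraMap (⟨_, h⟩ : towerField β i)))

theorem IsTower.eRk_towerGens_le (hβ : IsTower β) {i : ℕ} (hi : i ≤ n) :
    (matroid ℚ ℂ).eRk (towerGens β i) ≤ i := by
  induction i with
  | zero => simp [towerGens]
  | succ i ih =>
    have h := towerGens_succ β ⟨i, hi⟩
    simp only at h
    rw [h]
    calc _ ≤ (matroid ℚ ℂ).eRk (towerGens β i) + 1 := by
          rcases hβ.isAlgebraic_or ⟨i, hi⟩ with ha | ha
          · rw [Set.insert_comm]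
            exact (matroid ℚ ℂ).eRk_insert_insert_le _ (mem_matroid_closure_of_isAlgebraic ha)
          · exact (matroid ℚ ℂ).eRk_insert_insert_le _ (mem_matroid_closure_of_isAlgebraic ha)
      _ ≤ i + 1 := by gcongr; exact ih (by omega)
      _ = (i + 1 : ℕ) := (Nat.cast_succ i).symm

theorem eRk_towerGens_succ_le (i : Fin n) (hb : IsAlgebraic (towerField β i) (β i))
    (he : IsAlgebraic (towerField β i) (Complex.exp (β i))) :
    (matroid ℚ ℂ).eRk (towerGens β (i + 1)) ≤ (matroid ℚ ℂ).eRk (towerGens β i) := by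
  rw [towerGens_succ, ← (matroid ℚ ℂ).eRk_closure_eq (towerGens β i)]
  exact (matroid ℚ ℂ).eRk_mono <| Set.insert_subset (mem_matroid_closure_of_isAlgebraic hb) <|
    Set.insert_subset (mem_matroid_closure_of_isAlgebraic he) ((matroid ℚ ℂ).subset_closure _)

theorem exists_algebraicIndependent_towerField (hS : SchanuelConjecture)
    (hred : LinearIndependent ℚ β) {i : ℕ} (hi : i ≤ n) :
    ∃ f : Fin i → ℂ, (∀ k, f k ∈ towerField β i) ∧ AlgebraicIndependent ℚ f := by
  obtain ⟨f, hf_mem, hf⟩ := hS i (β ∘ Fin.castLE hi) (hred.comp _ (Fin.castLE_injective hi))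
  refine ⟨f, fun k => Subfield.closure_le.2 ?_ (hf_mem k), hf⟩
  rintro x (⟨j, rfl⟩ | ⟨j, rfl⟩)
  · exact Subfield.subset_closure ⟨Fin.castLE hi j, j.isLt, Or.inl rfl⟩
  · exact Subfield.subset_closure ⟨Fin.castLE hi j, j.isLt, Or.inr rfl⟩

end Tower

/-- Assuming Schanuel's conjecture, in a reduced tower exactly one of `β_i`, `e^{β_i}`
is algebraic over `B_{i-1}`, and the transcendence degree of `B_i` over `ℚ` is
exactly `i` (here the `(i+1)`-st entry is `β i`, `B_{i-1} = towerField β i` and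
`B_i = towerField β (i+1)`). -/
theorem reduced_tower_trdeg (hS : SchanuelConjecture) {n : ℕ} (β : Fin n → ℂ)
    (hβ : IsTower β) (hred : LinearIndependent ℚ β) :
    ∀ i : Fin n,
      Xor' (IsAlgebraic (towerField β (i : ℕ)) (β i))
           (IsAlgebraic (towerField β (i : ℕ)) (Complex.exp (β i))) ∧
      (∃ f : Fin ((i : ℕ) + 1) → ℂ, (∀ k, f k ∈ towerField β ((i : ℕ) + 1)) ∧
        AlgebraicIndependent ℚ f) ∧
      (∀ (m : ℕ) (f : Fin m → ℂ), (∀ k, f k ∈ towerField β ((i : ℕ) + 1)) →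
        AlgebraicIndependent ℚ f → m ≤ (i : ℕ) + 1) := by
  intro i
  have hi : (i : ℕ) + 1 ≤ n := i.isLt
  have h_card : ∀ (m : ℕ) (g : Fin m → ℂ), (∀ k, g k ∈ towerField β ((i : ℕ) + 1)) →
      AlgebraicIndependent ℚ g → (m : ℕ∞) ≤ (matroid ℚ ℂ).eRk (towerGens β (i + 1)) :=
    fun m g hg_mem hg => by
      simpa only [ENat.card_eq_coe_fintype_card, Fintype.card_fin]
        using hg.card_le_eRk (S := towerGens β (i + 1)) hg_mem
  obtain ⟨f, hf_mem, hf⟩ := exists_algebraicIndependent_towerField hS hred hi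
  refine ⟨(xor_iff_or_and_not_and _ _).2 ⟨hβ.isAlgebraic_or i, ?_⟩, ⟨f, hf_mem, hf⟩,
    fun m g hg_mem hg => by exact_mod_cast (h_card m g hg_mem hg).trans (hβ.eRk_towerGens_le hi)⟩
  rintro ⟨hb, he⟩
  have := (h_card _ f hf_mem hf).trans <|
    (eRk_towerGens_succ_le i hb he).trans (hβ.eRk_towerGens_le i.isLt.le)
  exact Nat.not_succ_le_self _ (by exact_mod_cast this)
end

section
/- Assuming Schanuel's conjecture, the unique real root R of x + e^x = 0 does not lie in the field E of EL numbers. -/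
/-!
Every EL number is algebraic over `ℚ(s, exp s)` for a finite *exponential tower* `s`: a set built
by adjoining, one at a time, elements `a` such that `a` or `exp a` is algebraic over what was built
before. Each step raises the transcendence degree of `ℚ(s, exp s)` by at most one, and not at all
when `a` lies in the `ℚ`-span of the earlier elements, so this degree is at most `dim_ℚ span s`;
Schanuel's conjecture gives the reverse inequality.

If `R ∈ 𝔼`, peel off the last elements of the tower until `R ∉ span s` while `R` stays algebraic
over `ℚ(s, exp s)`. This is possible because `exp R = -R`: if `R = q a + w` with `w` in the span of
the remaining elements, then `R` is algebraic over them as soon as `a` or `exp a` is. Adjoining `R`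
to `s` then raises the dimension but not the transcendence degree, contradicting Schanuel.
-/

open Complex

open Module Submodule

/-- `algMatroid.eRk S` is the transcendence degree of `ℚ(S)` over `ℚ`. -/
noncomputable abbrev algMatroid : Matroid ℂ := AlgebraicIndependent.matroid ℚ ℂ

noncomputable def algClosure (S : Set ℂ) : Subfield ℂ where
  __ := (Subalgebra.algebraicClosure (Algebra.adjoin ℚ S) ℂ).toSubring
  inv_mem' _ hx := hx.inv

section algClosure

variable {S T : Set ℂ} {x : ℂ}

theorem mem_algClosure : x ∈ algClosure S ↔ IsAlgebraic (Algebra.adjoin ℚ S) x := Iff.rfl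

theorem coe_algClosure (S : Set ℂ) : (algClosure S : Set ℂ) = algMatroid.closure S :=
  AlgebraicIndependent.matroid_closure_eq.symm

theorem mem_algClosure_of_mem_adjoin (hx : x ∈ Algebra.adjoin ℚ S) : x ∈ algClosure S :=
  isAlgebraic_algebraMap (⟨x, hx⟩ : Algebra.adjoin ℚ S)

theorem subset_algClosure (S : Set ℂ) : S ⊆ algClosure S :=
  fun _ hx => mem_algClosure_of_mem_adjoin (Algebra.subset_adjoin hx)

theorem algClosure_le_of_subset (h : S ⊆ algClosure T) : algClosure S ≤ algClosure T := by
  rw [← SetLike.coe_subset_coe, coe_algClosure, coe_algClosure]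
  rw [coe_algClosure] at h
  exact algMatroid.closure_subset_closure_of_subset_closure h

theorem algClosure_mono (h : S ⊆ T) : algClosure S ≤ algClosure T :=
  algClosure_le_of_subset (h.trans (subset_algClosure T))

theorem eRk_le_of_subset_algClosure (h : S ⊆ algClosure T) :
    algMatroid.eRk S ≤ algMatroid.eRk T := by
  rw [coe_algClosure] at h
  simpa only [Matroid.eRk_closure_eq] using algMatroid.eRk_mono h

theorem mem_algClosure_of_pow_mem {n : ℕ} (hn : n ≠ 0) (h : x ^ n ∈ algClosure S) :
    x ∈ algClosure S :=
  mem_algClosure.2 ((mem_algClosure.1 h).of_pow (Nat.pos_of_ne_zero hn))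

theorem exp_qsmul_mem_algClosure (q : ℚ) (h : exp x ∈ algClosure S) :
    exp (q • x) ∈ algClosure S := by
  refine mem_algClosure_of_pow_mem q.den_nz ?_
  have : ((q.den : ℕ) : ℂ) * (q • x) = (q.num : ℂ) * x := by
    rw [Rat.smul_def, ← mul_assoc, ← Rat.cast_natCast, ← Rat.cast_mul, Rat.den_mul_eq_num,
      Rat.cast_intCast]
  rw [← exp_nat_mul, this, exp_int_mul]
  exact zpow_mem h _

theorem AlgebraicIndependent.le_eRk_of_range_subset {n : ℕ} {f : Fin n → ℂ}
    (hf : AlgebraicIndependent ℚ f) (h : Set.range f ⊆ algClosure S) : n ≤ algMatroid.eRk S := by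
  have hindep : algMatroid.Indep (Set.range f) := hf.to_subtype_range
  calc (n : ℕ∞) = ENat.card (Fin n) := by simp
    _ ≤ (Set.range f).encard := hf.injective.encard_range
    _ = algMatroid.eRk (Set.range f) := hindep.eRk_eq_encard.symm
    _ ≤ algMatroid.eRk S := eRk_le_of_subset_algClosure h

theorem eRk_le_eRk_add_one_of_subset_insert {b : ℂ} {S T : Set ℂ}
    (h : S ⊆ insert b (algClosure T)) : algMatroid.eRk S ≤ algMatroid.eRk T + 1 := by
  rw [coe_algClosure] at h
  calc algMatroid.eRk S ≤ algMatroid.eRk (insert b (algMatroid.closure T)) :=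
        algMatroid.eRk_mono h
    _ ≤ algMatroid.eRk (algMatroid.closure T) + 1 := algMatroid.eRk_insert_le_add_one _ _
    _ = algMatroid.eRk T + 1 := by rw [Matroid.eRk_closure_eq]

end algClosure

def expGens (s : Set ℂ) : Set ℂ := s ∪ exp '' s

section expGens

variable {s t : Set ℂ} {a : ℂ}

theorem subset_expGens : s ⊆ expGens s := Set.subset_union_left

theorem exp_mem_expGens (ha : a ∈ s) : exp a ∈ expGens s := Or.inr ⟨a, ha, rfl⟩

theorem expGens_mono (h : s ⊆ t) : expGens s ⊆ expGens t :=
  Set.union_subset_union h (Set.image_mono h)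

theorem expGens_insert : expGens (insert a s) = insert a (insert (exp a) (expGens s)) := by
  ext x
  simp only [expGens, Set.image_insert_eq, Set.mem_union, Set.mem_insert_iff]
  tauto

theorem span_subset_algClosure_expGens : (span ℚ s : Set ℂ) ⊆ algClosure (expGens s) :=
  fun _ hx => mem_algClosure_of_mem_adjoin
    (Algebra.adjoin_mono subset_expGens (Algebra.span_le_adjoin ℚ s hx))

theorem exp_mem_algClosure_of_mem_span (ha : a ∈ span ℚ s) : exp a ∈ algClosure (expGens s) := by
  induction ha using span_induction with
  | mem x hx => exact subset_algClosure _ (exp_mem_expGens hx)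
  | zero => rw [exp_zero]; exact one_mem _
  | add x y _ _ hx hy => rw [exp_add]; exact mul_mem hx hy
  | smul q x _ hx => exact exp_qsmul_mem_algClosure q hx

end expGens

theorem finrank_span_lt_finrank_span_insert {K V : Type*} [DivisionRing K] [AddCommGroup V]
    [Module K V] {s : Set V} {a : V} (hs : s.Finite) (ha : a ∉ span K s) :
    finrank K (span K s) < finrank K (span K (insert a s)) := by
  have := FiniteDimensional.span_of_finite K (hs.insert a)
  refine finrank_lt_finrank_of_lt (lt_of_le_of_ne (span_mono (Set.subset_insert _ _)) ?_)
  intro h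
  exact ha (h ▸ subset_span (Set.mem_insert a s))

theorem SchanuelConjecture.finrank_span_le_eRk (hS : SchanuelConjecture) {s : Set ℂ}
    (hs : s.Finite) : (finrank ℚ (span ℚ s) : ℕ∞) ≤ algMatroid.eRk (expGens s) := by
  have := FiniteDimensional.span_of_finite ℚ hs
  set b := Module.finBasis ℚ (span ℚ s)
  obtain ⟨f, hf_mem, hf⟩ := hS _ (fun i => (b i : ℂ))
    (b.linearIndependent.map' (span ℚ s).subtype (ker_subtype _))
  refine hf.le_eRk_of_range_subset ?_
  rintro _ ⟨i, rfl⟩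
  refine Subfield.closure_le.2 ?_ (hf_mem i)
  rintro _ (⟨j, rfl⟩ | ⟨j, rfl⟩)
  · exact span_subset_algClosure_expGens (b j).2
  · exact exp_mem_algClosure_of_mem_span (b j).2

theorem mem_algClosure_of_mem_span_insert {s : Set ℂ} {a z : ℂ}
    (ha : a ∈ algClosure (expGens s) ∨ exp a ∈ algClosure (expGens s))
    (hexp : exp z = -z) (hz : z ∈ span ℚ (insert a s)) : z ∈ algClosure (expGens s) := by
  obtain ⟨q, w, hw, rfl⟩ := mem_span_insert.1 hz
  have hwK := span_subset_algClosure_expGens hw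
  rcases ha with ha | ha
  · exact add_mem (SubfieldClass.qsmul_mem _ q ha) hwK
  · have hexpK : exp (q • a + w) ∈ algClosure (expGens s) := by
      rw [exp_add]
      exact mul_mem (exp_qsmul_mem_algClosure q ha) (exp_mem_algClosure_of_mem_span hw)
    rw [hexp] at hexpK
    exact neg_mem_iff.1 hexpK

inductive IsExpTower : Set ℂ → Prop
  | empty : IsExpTower ∅
  | protected insert {s : Set ℂ} {a : ℂ} : IsExpTower s →
      a ∈ algClosure (expGens s) ∨ exp a ∈ algClosure (expGens s) → IsExpTower (insert a s)

namespace IsExpTower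

variable {s t : Set ℂ} {z : ℂ}

theorem finite (hs : IsExpTower s) : s.Finite := by
  induction hs with
  | empty => exact Set.finite_empty
  | insert _ _ ih => exact ih.insert _

theorem union (hs : IsExpTower s) (ht : IsExpTower t) : IsExpTower (s ∪ t) := by
  induction ht with
  | empty => rwa [Set.union_empty]
  | @insert t a _ ha ih =>
    rw [Set.union_insert]
    have hle := algClosure_mono (expGens_mono (Set.subset_union_right (s := s) (t := t)))
    exact ih.insert (ha.imp (hle ·) (hle ·))

theorem eRk_le (hs : IsExpTower s) :
    algMatroid.eRk (expGens s) ≤ finrank ℚ (span ℚ s) := by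
  induction hs with
  | empty => simp [expGens]
  | @insert s a hs ha ih =>
    by_cases has : a ∈ span ℚ s
    · rw [span_insert_eq_span has]
      refine (eRk_le_of_subset_algClosure ?_).trans ih
      rw [expGens_insert]
      exact Set.insert_subset (span_subset_algClosure_expGens has)
        (Set.insert_subset (exp_mem_algClosure_of_mem_span has) (subset_algClosure _))
    · have hstep : algMatroid.eRk (expGens (insert a s)) ≤ algMatroid.eRk (expGens s) + 1 := by
        rw [expGens_insert]
        rcases ha with ha | ha
        · exact eRk_le_eRk_add_one_of_subset_insert
            (Set.insert_subset (Set.mem_insert_of_mem _ ha)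
              (Set.insert_subset_insert (subset_algClosure _)))
        · exact eRk_le_eRk_add_one_of_subset_insert
            (Set.insert_subset_insert (Set.insert_subset ha (subset_algClosure _)))
      have hlt := finrank_span_lt_finrank_span_insert hs.finite has
      calc algMatroid.eRk (expGens (insert a s)) ≤ algMatroid.eRk (expGens s) + 1 := hstep
        _ ≤ finrank ℚ (span ℚ s) + 1 := by gcongr
        _ ≤ finrank ℚ (span ℚ (insert a s)) := by exact_mod_cast hlt

theorem exists_notMem_span (hz0 : z ≠ 0) (hexp : exp z = -z) (hs : IsExpTower s)
    (hz : z ∈ algClosure (expGens s)) :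
    ∃ t, IsExpTower t ∧ z ∉ span ℚ t ∧ z ∈ algClosure (expGens t) := by
  induction hs with
  | empty => exact ⟨∅, .empty, by simpa using hz0, hz⟩
  | @insert s a hs ha ih =>
    by_cases hza : z ∈ span ℚ (insert a s)
    · exact ih (mem_algClosure_of_mem_span_insert ha hexp hza)
    · exact ⟨_, hs.insert ha, hza, hz⟩

theorem mem_span_of_mem_algClosure (hS : SchanuelConjecture) (hs : IsExpTower s)
    (hz : z ∈ algClosure (expGens s)) (hexp : exp z ∈ algClosure (expGens s)) :
    z ∈ span ℚ s := by
  by_contra hzs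
  have hlt := finrank_span_lt_finrank_span_insert hs.finite hzs
  have hgens : expGens (insert z s) ⊆ algClosure (expGens s) := by
    rw [expGens_insert]
    exact Set.insert_subset hz (Set.insert_subset hexp (subset_algClosure _))
  have := calc (finrank ℚ (span ℚ (insert z s)) : ℕ∞)
      ≤ algMatroid.eRk (expGens (insert z s)) := hS.finrank_span_le_eRk (hs.finite.insert z)
    _ ≤ algMatroid.eRk (expGens s) := eRk_le_of_subset_algClosure hgens
    _ ≤ finrank ℚ (span ℚ s) := hs.eRk_le
  exact hlt.not_ge (by exact_mod_cast this)

end IsExpTower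

noncomputable def expTowerField : Subfield ℂ :=
  ⨆ s : {s : Set ℂ // IsExpTower s}, algClosure (expGens s)

theorem mem_expTowerField {z : ℂ} :
    z ∈ expTowerField ↔ ∃ s, IsExpTower s ∧ z ∈ algClosure (expGens s) := by
  have : Nonempty {s : Set ℂ // IsExpTower s} := ⟨⟨∅, .empty⟩⟩
  rw [expTowerField, Subfield.mem_iSup_of_directed]
  · simp only [Subtype.exists, exists_prop]
  · rintro ⟨s, hs⟩ ⟨t, ht⟩
    exact ⟨⟨s ∪ t, hs.union ht⟩, algClosure_mono (expGens_mono Set.subset_union_left),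
      algClosure_mono (expGens_mono Set.subset_union_right)⟩

theorem elClosed_expTowerField : ELClosed expTowerField := by
  constructor
  · intro x hx
    obtain ⟨s, hs, hx⟩ := mem_expTowerField.1 hx
    exact mem_expTowerField.2 ⟨_, hs.insert (.inl hx),
      subset_algClosure _ (exp_mem_expGens (Set.mem_insert x s))⟩
  · intro x hx hx0
    obtain ⟨s, hs, hx⟩ := mem_expTowerField.1 hx
    refine mem_expTowerField.2 ⟨_, hs.insert (.inr ?_),
      subset_algClosure _ (subset_expGens (Set.mem_insert _ s))⟩
    rwa [exp_log hx0]

theorem EL_le_expTowerField : EL ≤ expTowerField := sInf_le elClosed_expTowerField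

/-- Assuming Schanuel's conjecture, the real root of `x + eˣ = 0` is not an EL number. -/
theorem root_not_mem_EL (hS : SchanuelConjecture) (R : ℝ)
    (hR : R + Real.exp R = 0) : (R : ℂ) ∉ EL := by
  intro hR_mem
  have hexp : exp (R : ℂ) = -R := by
    rw [← ofReal_exp, eq_neg_iff_add_eq_zero, add_comm]
    exact_mod_cast hR
  have hR0 : (R : ℂ) ≠ 0 := by
    intro h
    rw [h, exp_zero, neg_zero] at hexp
    exact one_ne_zero hexp
  obtain ⟨s, hs, hRs⟩ := mem_expTowerField.1 (EL_le_expTowerField hR_mem)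
  obtain ⟨t, ht, hRt_span, hRt⟩ := hs.exists_notMem_span hR0 hexp hRs
  exact hRt_span (ht.mem_span_of_mem_algClosure hS hRt (hexp ▸ neg_mem hRt))
end
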